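/- arXiv:2306.16771 — 2 statements merged into one kernel-verified Lean document; each statement's English description precedes it below -/
import Mathlib

section
/- If T' is a proper connected subhypergraph (subhypertree) of a k-uniform hypertree T, then the largest real root of φ_{T'} is strictly less than the largest real root of φ_T. -/
/-- A set of edges is a matching if its edges are pairwise disjoint. -/
def IsHyperMatching {γ : Type*} (M : Finset (Finset γ)) : Prop :=
  ∀ e ∈ M, ∀ f ∈ M, e ≠ f → Disjoint e f

open Classical in
/-- `mCount E t` is the number of `t`-matchings of the hypergraph with edge set `E`. -/
noncomputable def mCount {γ : Type*} (E : Finset (Finset γ)) (t : ℕ) : ℕ :=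
  (E.powerset.filter (fun M => M.card = t ∧ IsHyperMatching M)).card

/-- The matching polynomial `φ_H(λ) = ∑_t (-1)^t m_t(H) λ^(n - t k)` evaluated at `x`. -/
noncomputable def mPolyEval {γ : Type*} (n k : ℕ) (E : Finset (Finset γ)) (x : ℝ) : ℝ :=
  ∑ t ∈ Finset.range (E.card + 1), (-1 : ℝ) ^ t * (mCount E t : ℝ) * x ^ (n - t * k)

/-- A `k`-uniform hypertree on vertex set `V` with edge set `E`. -/
inductive IsHypertree {α : Type*} [DecidableEq α] (k : ℕ) : Finset α → Finset (Finset α) → Prop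
  | single (v : α) : IsHypertree k {v} ∅
  | attach {V : Finset α} {E : Finset (Finset α)} (e : Finset α) :
      IsHypertree k V E → e.card = k → (e ∩ V).card = 1 →
      IsHypertree k (V ∪ e) (insert e E)

/-!
Write `T` as a hypertree `T₁ ⊇ T'` with one more edge `e` attached at a vertex `v`: a proper
sub-hypertree can be grown inside `T` one pendant edge at a time, and the last edge added is `e`.
Splitting matchings according to whether they contain `e` gives
`φ_T(x) = x ^ (k - 1) φ_{T₁}(x) - φ_{T₁ - v}(x)`, and `T₁ - v` is a vertex-disjoint union of
proper sub-hypertrees of `T₁`, so `φ_{T₁ - v}` is the product of their matching polynomials.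
By induction on the number of edges these factors are positive from the largest root `r` of
`φ_{T₁}` on, so `φ_T(r) < 0` and `φ_T` has a root beyond `r`.

The induction is run on the statement "if `φ_T ≥ 0` on `[y, ∞)`, then `φ_{T'} > 0` on `[y, ∞)`
for every proper sub-hypertree `T'`", which needs no largest root of `φ_{T'}` to exist.
-/

open Finset

section LargestRoot

open Filter

variable {f : ℝ → ℝ}

theorem nonneg_of_isGreatest_root (hf : Continuous f) (htop : Tendsto f atTop atTop) {ρ : ℝ}
    (hρ : IsGreatest {x | f x = 0} ρ) {z : ℝ} (hz : ρ ≤ z) : 0 ≤ f z := by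
  rcases hz.eq_or_lt with rfl | hz
  · exact hρ.1.ge
  by_contra! hneg
  obtain ⟨b, hb, hzb⟩ := ((htop.eventually_gt_atTop 0).and (eventually_ge_atTop z)).exists
  obtain ⟨c, hc, hc0⟩ := intermediate_value_Icc hzb hf.continuousOn ⟨hneg.le, hb.le⟩
  exact (hρ.2 hc0).not_gt (hz.trans_le hc.1)

theorem exists_isGreatest_root_of_nonpos (hf : Continuous f) (htop : Tendsto f atTop atTop)
    {a : ℝ} (ha : f a ≤ 0) : ∃ ρ, a ≤ ρ ∧ IsGreatest {x | f x = 0} ρ := by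
  obtain ⟨b, hb⟩ := (htop.eventually_gt_atTop 0).exists_forall_of_atTop
  have hab : a ≤ b := le_of_not_ge fun h => (hb a h).not_ge ha
  obtain ⟨c, hc, hc0⟩ := intermediate_value_Icc hab hf.continuousOn ⟨ha, (hb b le_rfl).le⟩
  set S := {x | a ≤ x ∧ f x = 0}
  have hbdd : BddAbove S := ⟨b, fun x hx => le_of_not_ge fun h => (hb x h).ne' hx.2⟩
  have hS := ((isClosed_le continuous_const continuous_id).inter
    (isClosed_eq hf continuous_const)).csSup_mem ⟨c, hc.1, hc0⟩ hbdd
  refine ⟨sSup S, hS.1, hS.2, fun x hx => ?_⟩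
  rcases le_total a x with h | h
  · exact le_csSup hbdd ⟨h, hx⟩
  · exact h.trans hS.1

end LargestRoot

theorem sum_powerset_union_of_disjoint {ι β : Type*} [DecidableEq ι] [AddCommMonoid β]
    {s t : Finset ι} (hst : Disjoint s t) (f : Finset ι → β) :
    ∑ u ∈ (s ∪ t).powerset, f u = ∑ a ∈ s.powerset, ∑ b ∈ t.powerset, f (a ∪ b) := by
  rw [powerset_union, ← image_sup_product, sum_image, sum_product]
  · rfl
  rintro ⟨a, b⟩ hab ⟨a', b'⟩ hab' h
  simp only [coe_product, Set.mem_prod, mem_coe, mem_powerset, Function.uncurry_apply_pair,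
    sup_eq_union] at hab hab' h
  have key : ∀ a b, a ⊆ s → b ⊆ t → (a ∪ b) ∩ s = a ∧ (a ∪ b) ∩ t = b := by
    intro a b ha hb
    constructor <;> ext i <;> simp only [mem_inter, mem_union] <;>
      grind [disjoint_left]
  obtain ⟨ha, hb⟩ := key a b hab.1 hab.2
  obtain ⟨ha', hb'⟩ := key a' b' hab'.1 hab'.2
  rw [h] at ha hb
  rw [← ha, ← hb, ha', hb']

section MatchingPolynomial

open Polynomial Filter

variable {α : Type*}

theorem mCount_zero (E : Finset (Finset α)) : mCount E 0 = 1 := by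
  classical
  rw [mCount, card_eq_one]
  refine ⟨∅, eq_singleton_iff_unique_mem.mpr ⟨?_, fun M hM => ?_⟩⟩
  · exact mem_filter.mpr ⟨empty_mem_powerset E, card_empty, by simp [IsHyperMatching]⟩
  · exact card_eq_zero.mp (mem_filter.mp hM).2.1

noncomputable def matchingPolynomial (n k : ℕ) (E : Finset (Finset α)) : ℝ[X] :=
  ∑ t ∈ range (E.card + 1), C ((-1) ^ t * (mCount E t : ℝ)) * X ^ (n - t * k)

theorem mPolyEval_eq_eval (n k : ℕ) (E : Finset (Finset α)) :
    mPolyEval n k E = fun x => (matchingPolynomial n k E).eval x := by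
  ext x
  simp [matchingPolynomial, mPolyEval, eval_finsetSum, mul_assoc]

theorem matchingPolynomial_eq_X_pow_add {n k : ℕ} (hk : 0 < k) (hn : 0 < n)
    (E : Finset (Finset α)) : ∃ q : ℝ[X], q.degree < n ∧ matchingPolynomial n k E = X ^ n + q := by
  refine ⟨∑ t ∈ range E.card, C ((-1) ^ (t + 1) * (mCount E (t + 1) : ℝ)) * X ^ (n - (t + 1) * k),
    ?_, ?_⟩
  · refine (degree_sum_le _ _).trans_lt ((Finset.sup_lt_iff (WithBot.bot_lt_coe n)).mpr
      fun t _ => (degree_C_mul_X_pow_le _ _).trans_lt ?_)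
    exact Nat.cast_lt.mpr (Nat.sub_lt hn (Nat.mul_pos t.succ_pos hk))
  · rw [matchingPolynomial, sum_range_succ', add_comm, mCount_zero]
    simp

theorem continuous_mPolyEval (n k : ℕ) (E : Finset (Finset α)) : Continuous (mPolyEval n k E) := by
  rw [mPolyEval_eq_eval]
  exact (matchingPolynomial n k E).continuous

theorem tendsto_mPolyEval_atTop {n k : ℕ} (hk : 0 < k) (hn : 0 < n) (E : Finset (Finset α)) :
    Tendsto (mPolyEval n k E) atTop atTop := by
  obtain ⟨q, hq, hpq⟩ := matchingPolynomial_eq_X_pow_add hk hn E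
  have hdeg : (matchingPolynomial n k E).degree = n := by
    rw [hpq, degree_add_eq_left_of_degree_lt (by rwa [degree_X_pow]), degree_X_pow]
  rw [mPolyEval_eq_eval]
  refine tendsto_atTop_of_leadingCoeff_nonneg _ (by rw [hdeg]; exact_mod_cast hn) ?_
  rw [hpq, (monic_X_pow_add hq).leadingCoeff]
  exact zero_le_one

theorem isHyperMatching_iff_pairwise {M : Finset (Finset α)} :
    IsHyperMatching M ↔ (M : Set (Finset α)).Pairwise Disjoint := Iff.rfl

open Classical in
noncomputable def matchingTerm (n k : ℕ) (x : ℝ) (M : Finset (Finset α)) : ℝ :=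
  if IsHyperMatching M then (-1) ^ M.card * x ^ (n - M.card * k) else 0

theorem mPolyEval_eq_sum_powerset (n k : ℕ) (E : Finset (Finset α)) (x : ℝ) :
    mPolyEval n k E x = ∑ M ∈ E.powerset, matchingTerm n k x M := by
  classical
  simp only [matchingTerm, ← sum_filter]
  rw [mPolyEval, ← sum_fiberwise_of_maps_to (g := card) (t := range (E.card + 1))
    fun M hM => mem_range_succ_iff.mpr (card_le_card (mem_powerset.mp (mem_filter.mp hM).1))]
  refine sum_congr rfl fun t _ => ?_
  rw [filter_filter, sum_congr rfl fun M hM => by rw [(mem_filter.mp hM).2.2], sum_const,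
    nsmul_eq_mul, mCount]
  simp only [and_comm]
  ring

theorem matchingTerm_add {n k : ℕ} {M : Finset (Finset α)}
    (hM : IsHyperMatching M → M.card * k ≤ n) (j : ℕ) (x : ℝ) :
    matchingTerm (n + j) k x M = x ^ j * matchingTerm n k x M := by
  unfold matchingTerm
  split_ifs with h
  · rw [show n + j - M.card * k = j + (n - M.card * k) by have := hM h; omega, pow_add]
    ring
  · rw [mul_zero]

variable [DecidableEq α]

def IsUniformHypergraph (k : ℕ) (V : Finset α) (E : Finset (Finset α)) : Prop :=
  ∀ e ∈ E, e ⊆ V ∧ e.card = k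

-- Keeps the exponents `n - M.card * k` of the matching polynomial clear of truncated subtraction.
theorem IsUniformHypergraph.card_mul_le {k : ℕ} {V : Finset α} {E M : Finset (Finset α)}
    (hE : IsUniformHypergraph k V E) (hME : M ⊆ E) (hM : IsHyperMatching M) :
    M.card * k ≤ V.card := by
  calc M.card * k = ∑ e ∈ M, e.card := (sum_const_nat fun e he => (hE e (hME he)).2).symm
    _ = (M.biUnion id).card := (card_biUnion hM).symm
    _ ≤ V.card := card_le_card (biUnion_subset.mpr fun e he => (hE e (hME he)).1)

theorem isHyperMatching_insert {M : Finset (Finset α)} {e : Finset α} (he : e ∉ M) :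
    IsHyperMatching (insert e M) ↔ IsHyperMatching M ∧ ∀ g ∈ M, Disjoint e g := by
  simp only [isHyperMatching_iff_pairwise, coe_insert]
  exact Set.pairwise_insert_of_symm_of_notMem he

theorem matchingTerm_insert {n k : ℕ} {M : Finset (Finset α)} {e : Finset α} (he : e ∉ M)
    (hdisj : ∀ g ∈ M, Disjoint e g) (x : ℝ) :
    matchingTerm (n + k) k x (insert e M) = -matchingTerm n k x M := by
  have hins : IsHyperMatching (insert e M) ↔ IsHyperMatching M :=
    (isHyperMatching_insert he).trans (and_iff_left hdisj)
  by_cases hM : IsHyperMatching M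
  · rw [matchingTerm, if_pos (hins.mpr hM), matchingTerm, if_pos hM, card_insert_of_notMem he,
      add_one_mul, Nat.add_sub_add_right, pow_succ]
    ring
  · rw [matchingTerm, if_neg (mt hins.mp hM), matchingTerm, if_neg hM, neg_zero]

theorem mPolyEval_insert_of_pendant {k : ℕ} {V : Finset α} {E : Finset (Finset α)}
    (hE : IsUniformHypergraph k V E) {e : Finset α} {v : α} (he : e ∉ E) (hek : e.card = k)
    (hev : e ∩ V = {v}) (x : ℝ) :
    mPolyEval (V ∪ e).card k (insert e E) x =
      x ^ (k - 1) * mPolyEval V.card k E x - mPolyEval (V.card - 1) k {g ∈ E | v ∉ g} x := by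
  have hv : v ∈ e ∧ v ∈ V := mem_inter.mp (hev ▸ mem_singleton_self v)
  have hk : 0 < k := hek ▸ card_pos.mpr ⟨v, hv.1⟩
  have hcard : (V ∪ e).card + 1 = V.card + k := by
    rw [← hek, ← card_union_add_card_inter V e, inter_comm, hev, card_singleton]
  have hV := card_pos.mpr ⟨v, hv.2⟩
  have heM : ∀ M ⊆ E, e ∉ M := fun M hM h => he (hM h)
  simp only [mPolyEval_eq_sum_powerset, sum_powerset_insert he, mul_sum, sub_eq_add_neg,
    ← sum_neg_distrib]
  congr 1
  · rw [show (V ∪ e).card = V.card + (k - 1) by omega]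
    exact sum_congr rfl fun M hM => matchingTerm_add (hE.card_mul_le (mem_powerset.mp hM)) _ x
  · rw [show (V ∪ e).card = V.card - 1 + k by omega,
      ← sum_subset (powerset_mono.mpr (filter_subset (fun g => v ∉ g) E))]
    · refine sum_congr rfl fun M hM => matchingTerm_insert (heM M ?_) (fun g hg => ?_) x
      · exact (mem_powerset.mp hM).trans (filter_subset _ E)
      · -- an edge of `E` meets `e` at most in `v`
        obtain ⟨hgE, hvg⟩ := mem_filter.mp (mem_powerset.mp hM hg)
        exact disjoint_left.mpr fun a hae hag =>
          hvg (mem_singleton.mp (hev ▸ mem_inter.mpr ⟨hae, (hE g hgE).1 hag⟩) ▸ hag)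
    · intro M hM hMv
      obtain ⟨g, hgM, hvg⟩ : ∃ g ∈ M, v ∈ g := by
        by_contra! h
        exact hMv (mem_powerset.mpr fun g hg => mem_filter.mpr ⟨mem_powerset.mp hM hg, h g hg⟩)
      have hM' : ¬IsHyperMatching (insert e M) := fun h => disjoint_left.mp
        (((isHyperMatching_insert (heM M (mem_powerset.mp hM))).mp h).2 g hgM) hv.1 hvg
      rw [matchingTerm, if_neg hM']

theorem matchingTerm_union {n₁ n₂ k : ℕ} {M₁ M₂ : Finset (Finset α)} (hM : Disjoint M₁ M₂)
    (hcross : ∀ a ∈ M₁, ∀ b ∈ M₂, Disjoint a b) (h₁ : IsHyperMatching M₁ → M₁.card * k ≤ n₁)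
    (h₂ : IsHyperMatching M₂ → M₂.card * k ≤ n₂) (x : ℝ) :
    matchingTerm (n₁ + n₂) k x (M₁ ∪ M₂) = matchingTerm n₁ k x M₁ * matchingTerm n₂ k x M₂ := by
  have hmatch : IsHyperMatching (M₁ ∪ M₂) ↔ IsHyperMatching M₁ ∧ IsHyperMatching M₂ := by
    simp only [isHyperMatching_iff_pairwise, coe_union, Set.pairwise_union_of_symm]
    exact ⟨fun h => ⟨h.1, h.2.1⟩, fun h => ⟨h.1, h.2, fun a ha b hb _ => hcross a ha b hb⟩⟩
  by_cases hm : IsHyperMatching M₁ ∧ IsHyperMatching M₂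
  · have := h₁ hm.1
    have := h₂ hm.2
    rw [matchingTerm, if_pos (hmatch.mpr hm), matchingTerm, if_pos hm.1, matchingTerm,
      if_pos hm.2, card_union_of_disjoint hM, add_mul, show n₁ + n₂ - (M₁.card * k + M₂.card * k)
        = (n₁ - M₁.card * k) + (n₂ - M₂.card * k) by omega, pow_add, pow_add]
    ring
  · rw [matchingTerm, if_neg (mt hmatch.mp hm)]
    rcases not_and_or.mp hm with h | h <;> simp [matchingTerm, h]

theorem mPolyEval_union {k : ℕ} (hk : 0 < k) {V W : Finset α} {E F : Finset (Finset α)}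
    (hE : IsUniformHypergraph k V E) (hF : IsUniformHypergraph k W F) (hVW : Disjoint V W)
    (x : ℝ) :
    mPolyEval (V ∪ W).card k (E ∪ F) x = mPolyEval V.card k E x * mPolyEval W.card k F x := by
  have hcross : ∀ e ∈ E, ∀ f ∈ F, Disjoint e f := fun e he f hf =>
    hVW.mono (hE e he).1 (hF f hf).1
  -- edges are nonempty, so an edge of both `E` and `F` would lie in `V ∩ W = ∅`
  have hEF : Disjoint E F := disjoint_left.mpr fun e he heF => by
    have hk' := (hE e he).2
    rw [disjoint_self.mp (hcross e he e heF), bot_eq_empty, card_empty] at hk'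
    omega
  simp only [mPolyEval_eq_sum_powerset, sum_powerset_union_of_disjoint hEF, sum_mul_sum,
    card_union_of_disjoint hVW]
  refine sum_congr rfl fun M₁ hM₁ => sum_congr rfl fun M₂ hM₂ => ?_
  rw [mem_powerset] at hM₁ hM₂
  exact matchingTerm_union (hEF.mono hM₁ hM₂) (fun a ha b hb => hcross a (hM₁ ha) b (hM₂ hb))
    (hE.card_mul_le hM₁) (hF.card_mul_le hM₂) x

end MatchingPolynomial

section Hypertrees

variable {α : Type*} [DecidableEq α]

namespace IsHypertree

variable {k : ℕ} {V : Finset α} {E : Finset (Finset α)}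

theorem isUniformHypergraph (hT : IsHypertree k V E) : IsUniformHypergraph k V E := by
  induction hT with
  | single v => simp [IsUniformHypergraph]
  | attach e _ hek _ ih =>
    intro f hf
    rcases mem_insert.mp hf with rfl | hf
    · exact ⟨subset_union_right, hek⟩
    · exact ⟨(ih f hf).1.trans subset_union_left, (ih f hf).2⟩

theorem nonempty (hT : IsHypertree k V E) : V.Nonempty := by
  induction hT with
  | single v => exact singleton_nonempty v
  | attach e _ _ _ ih => exact ih.mono subset_union_left

theorem pos_of_nonempty (hT : IsHypertree k V E) (hE : E.Nonempty) : 0 < k := by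
  induction hT with
  | single v => simp at hE
  | @attach V₁ _ e _ hek hcap _ =>
    have := card_le_card (inter_subset_left : e ∩ V₁ ⊆ e)
    omega

theorem card_eq (hT : IsHypertree k V E) : V.card = E.card * (k - 1) + 1 := by
  induction hT with
  | single v => simp
  | @attach V E e hT hek hcap ih =>
    by_cases he : e ∈ E
    · rw [union_eq_left.mpr ((hT.isUniformHypergraph e he).1), insert_eq_of_mem he, ih]
    · have hunion := card_union_add_card_inter V e
      rw [inter_comm V e, hcap, hek] at hunion
      have := card_le_card (subset_union_left : V ⊆ V ∪ e)
      rw [card_insert_of_notMem he, add_one_mul]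
      omega

theorem card_mul_add_one_le_card_biUnion (hT : IsHypertree k V E) {F : Finset (Finset α)}
    (hFE : F ⊆ E) (hF : F.Nonempty) : F.card * (k - 1) + 1 ≤ (F.biUnion id).card := by
  induction hT generalizing F with
  | single v => simp [subset_empty.mp hFE] at hF
  | @attach V₁ E₁ e hT₁ hek hcap ih =>
    by_cases hFE₁ : F ⊆ E₁
    · exact ih hFE₁ hF
    have heF : e ∈ F := by
      obtain ⟨g, hgF, hgE₁⟩ := not_subset.mp hFE₁
      exact (mem_insert.mp (hFE hgF)).resolve_right hgE₁ ▸ hgF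
    have hF₁E₁ : F.erase e ⊆ E₁ := fun g hg =>
      (mem_insert.mp (hFE (mem_of_mem_erase hg))).resolve_left (ne_of_mem_erase hg)
    have hk := card_le_card (inter_subset_left : e ∩ V₁ ⊆ e)
    rw [← insert_erase heF, biUnion_insert, card_insert_of_notMem (notMem_erase e F), add_one_mul,
      id]
    rcases (F.erase e).eq_empty_or_nonempty with h | h
    · simp only [h, card_empty, biUnion_empty, union_empty]
      omega
    · have hmeet : (e ∩ (F.erase e).biUnion id).card ≤ 1 := hcap ▸ card_le_card
        (inter_subset_inter_left (biUnion_subset.mpr fun g hg =>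
          (hT₁.isUniformHypergraph g (hF₁E₁ hg)).1))
      have := card_union_add_card_inter e ((F.erase e).biUnion id)
      have := ih hF₁E₁ h
      omega

theorem exists_edge_crossing (hT : IsHypertree k V E) {U : Finset α} (hin : (V ∩ U).Nonempty)
    (hout : (V \ U).Nonempty) : ∃ f ∈ E, (f ∩ U).Nonempty ∧ (f \ U).Nonempty := by
  induction hT with
  | single v =>
    obtain ⟨a, ha⟩ := hin
    obtain ⟨b, hb⟩ := hout
    simp only [mem_inter, mem_sdiff, mem_singleton] at ha hb
    exact absurd (hb.1 ▸ ha.1 ▸ ha.2) hb.2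
  | @attach V₁ E₁ e _ _ hcap ih =>
    by_cases h₁ : (V₁ ∩ U).Nonempty ∧ (V₁ \ U).Nonempty
    · obtain ⟨f, hf, hfU⟩ := ih h₁.1 h₁.2
      exact ⟨f, mem_insert_of_mem hf, hfU⟩
    obtain ⟨u, hu⟩ := card_eq_one.mp hcap
    have hu' : u ∈ e ∩ V₁ := hu ▸ mem_singleton_self u
    rw [mem_inter] at hu'
    refine ⟨e, mem_insert_self e E₁, ?_⟩
    by_cases huU : u ∈ U
    · have hV₁U : V₁ ⊆ U := by
        by_contra h
        exact h₁ ⟨⟨u, mem_inter.mpr ⟨hu'.2, huU⟩⟩, sdiff_nonempty.mpr h⟩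
      obtain ⟨b, hb⟩ := hout
      rw [mem_sdiff, mem_union] at hb
      have hbe : b ∈ e := hb.1.resolve_left fun h => hb.2 (hV₁U h)
      exact ⟨⟨u, mem_inter.mpr ⟨hu'.1, huU⟩⟩, ⟨b, mem_sdiff.mpr ⟨hbe, hb.2⟩⟩⟩
    · have hV₁U : Disjoint V₁ U := by
        rw [disjoint_iff_inter_eq_empty, ← not_nonempty_iff_eq_empty]
        exact fun h => h₁ ⟨h, ⟨u, mem_sdiff.mpr ⟨hu'.2, huU⟩⟩⟩
      obtain ⟨a, ha⟩ := hin
      rw [mem_inter, mem_union] at ha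
      have hae : a ∈ e := ha.1.resolve_left fun h => disjoint_left.mp hV₁U h ha.2
      exact ⟨⟨a, mem_inter.mpr ⟨hae, ha.2⟩⟩, ⟨u, mem_sdiff.mpr ⟨hu'.1, huU⟩⟩⟩

theorem exists_pendant_edge (hT : IsHypertree k V E) {V' : Finset α} {E' : Finset (Finset α)}
    (hT' : IsHypertree k V' E') (hV : V' ⊆ V) (hE : E' ⊆ E) (hne : E' ≠ E) :
    ∃ f ∈ E, f ∉ E' ∧ ∃ v, f ∩ V' = {v} := by
  obtain ⟨f, hfE, hfE', hfV'⟩ : ∃ f ∈ E, f ∉ E' ∧ (f ∩ V').Nonempty := by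
    by_cases hVV : V' = V
    · obtain ⟨f, hfE, hfE'⟩ := exists_of_ssubset (ssubset_of_subset_of_ne hE hne)
      have hk := hT.pos_of_nonempty ⟨f, hfE⟩
      obtain ⟨hfV, hfk⟩ := hT.isUniformHypergraph f hfE
      refine ⟨f, hfE, hfE', ?_⟩
      rw [hVV, inter_eq_left.mpr hfV, ← card_pos, hfk]
      exact hk
    · obtain ⟨f, hfE, hfin, hfout⟩ := hT.exists_edge_crossing (U := V')
        (by rw [inter_eq_right.mpr hV]; exact hT'.nonempty)
        (sdiff_nonempty.mpr fun h => hVV (h.antisymm' hV))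
      refine ⟨f, hfE, fun hf => ?_, hfin⟩
      rw [sdiff_eq_empty_iff_subset.mpr (hT'.isUniformHypergraph f hf).1] at hfout
      exact not_nonempty_empty hfout
  -- the edges `insert f E'` span at least `E'.card * (k - 1) + k` vertices, all in `f ∪ V'`
  refine ⟨f, hfE, hfE', card_eq_one.mp (le_antisymm ?_ (card_pos.mpr hfV'))⟩
  have hfk := (hT.isUniformHypergraph f hfE).2
  have hk := hT.pos_of_nonempty ⟨f, hfE⟩
  have hspan :=
    hT.card_mul_add_one_le_card_biUnion (insert_subset hfE hE) (insert_nonempty f E')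
  have hsub : (insert f E').biUnion id ⊆ f ∪ V' := by
    rw [biUnion_insert]
    exact union_subset_union subset_rfl
      (biUnion_subset.mpr fun g hg => (hT'.isUniformHypergraph g hg).1)
  have := card_le_card hsub
  have := card_union_add_card_inter f V'
  have := hT'.card_eq
  rw [card_insert_of_notMem hfE', add_one_mul] at hspan
  omega

theorem exists_pendant_decomposition (hT : IsHypertree k V E) {V' : Finset α}
    {E' : Finset (Finset α)} (hT' : IsHypertree k V' E') (hV : V' ⊆ V) (hE : E' ⊆ E)
    (hne : E' ≠ E) :
    ∃ V₁ E₁ e v, IsHypertree k V₁ E₁ ∧ V' ⊆ V₁ ∧ E' ⊆ E₁ ∧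
      e ∉ E₁ ∧ e.card = k ∧ e ∩ V₁ = {v} ∧ V = V₁ ∪ e ∧ E = insert e E₁ := by
  induction hgap : E.card - E'.card generalizing V' E' with
  | zero => exact absurd (eq_of_subset_of_card_le hE (by omega)) hne
  | succ n ih =>
    obtain ⟨f, hfE, hfE', v, hfv⟩ := hT.exists_pendant_edge hT' hV hE hne
    have hfk := (hT.isUniformHypergraph f hfE).2
    have hT'' := hT'.attach f hfk (by rw [hfv, card_singleton])
    have hV'' : V' ∪ f ⊆ V := union_subset hV (hT.isUniformHypergraph f hfE).1
    have hE'' : insert f E' ⊆ E := insert_subset hfE hE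
    by_cases hfull : insert f E' = E
    · refine ⟨V', E', f, v, hT', subset_rfl, subset_rfl, hfE', hfk, hfv, ?_, hfull.symm⟩
      refine (eq_of_subset_of_card_le hV'' ?_).symm
      rw [hT.card_eq, hT''.card_eq, hfull]
    · have hgap' : E.card - (insert f E').card = n := by
        rw [card_insert_of_notMem hfE']
        omega
      obtain ⟨V₁, E₁, e, w, hT₁, hV₁, hE₁, hrest⟩ := ih hT'' hV'' hE'' hfull hgap'
      exact ⟨V₁, E₁, e, w, hT₁, subset_union_left.trans hV₁, (subset_insert f E').trans hE₁,
        hrest⟩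

end IsHypertree

inductive IsHyperforest (k : ℕ) : Finset α → Finset (Finset α) → Prop
  | empty : IsHyperforest k ∅ ∅
  | union {V W : Finset α} {E F : Finset (Finset α)} : IsHyperforest k V E → IsHypertree k W F →
      Disjoint V W → IsHyperforest k (V ∪ W) (E ∪ F)

namespace IsHyperforest

variable {k : ℕ} {V : Finset α} {E : Finset (Finset α)}

theorem isUniformHypergraph (hF : IsHyperforest k V E) : IsUniformHypergraph k V E := by
  induction hF with
  | empty => simp [IsUniformHypergraph]
  | union _ hT _ ih =>
    intro e he
    rcases mem_union.mp he with he | he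
    · exact ⟨(ih e he).1.trans subset_union_left, (ih e he).2⟩
    · exact ⟨(hT.isUniformHypergraph e he).1.trans subset_union_right,
        (hT.isUniformHypergraph e he).2⟩

theorem union_isolated (hF : IsHyperforest k V E) {S : Finset α} (hS : Disjoint V S) :
    IsHyperforest k (V ∪ S) E := by
  induction S using Finset.induction_on with
  | empty => simpa using hF
  | @insert a S ha ih =>
    rw [disjoint_insert_right] at hS
    have h := (ih hS.2).union (IsHypertree.single (k := k) a) (by simp [hS.1, ha])
    rwa [union_empty, union_assoc, union_singleton] at h

theorem attach (hF : IsHyperforest k V E) {f : Finset α} {u : α} (hu : u ∈ V)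
    (hf : f ∩ V = {u}) (hfk : f.card = k) : IsHyperforest k (V ∪ f) (insert f E) := by
  induction hF with
  | empty => simp at hu
  | @union V W E F hF hT hVW ih =>
    have hmem : ∀ a, a ∈ f → (a ∈ V ∨ a ∈ W) → a = u := fun a haf haVW =>
      mem_singleton.mp (hf ▸ mem_inter.mpr ⟨haf, mem_union.mpr haVW⟩)
    have huf : u ∈ f := (mem_inter.mp (hf ▸ mem_singleton_self u)).1
    rcases mem_union.mp hu with huV | huW
    · have hfV : f ∩ V = {u} := by
        ext a; simp only [mem_inter, mem_singleton]
        exact ⟨fun h => hmem a h.1 (Or.inl h.2), fun h => h ▸ ⟨huf, huV⟩⟩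
      have hfW : Disjoint (V ∪ f) W := disjoint_union_left.mpr ⟨hVW, disjoint_left.mpr
        fun a haf haW => disjoint_left.mp hVW (hmem a haf (Or.inr haW) ▸ huV) haW⟩
      rw [union_right_comm, ← insert_union]
      exact (ih huV hfV).union hT hfW
    · have hfW : f ∩ W = {u} := by
        ext a; simp only [mem_inter, mem_singleton]
        exact ⟨fun h => hmem a h.1 (Or.inr h.2), fun h => h ▸ ⟨huf, huW⟩⟩
      have hVf : Disjoint V (W ∪ f) := disjoint_union_right.mpr ⟨hVW, disjoint_left.mpr
        fun a haV haf => disjoint_left.mp hVW haV (hmem a haf (Or.inl haV) ▸ huW)⟩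
      rw [union_assoc, ← union_insert]
      exact hF.union (hT.attach f hfk (by rw [hfW, card_singleton])) hVf

end IsHyperforest

theorem IsHypertree.isHyperforest {k : ℕ} {V : Finset α} {E : Finset (Finset α)}
    (hT : IsHypertree k V E) : IsHyperforest k V E := by
  simpa using IsHyperforest.empty.union hT (disjoint_empty_left V)

theorem IsHypertree.isHyperforest_erase {k : ℕ} {V : Finset α} {E : Finset (Finset α)}
    (hT : IsHypertree k V E) {v : α} (hv : v ∈ V) :
    IsHyperforest k (V.erase v) {e ∈ E | v ∉ e} := by
  induction hT with
  | single w =>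
    rw [mem_singleton.mp hv, erase_singleton, filter_empty]
    exact IsHyperforest.empty
  | @attach V₁ E₁ e hT₁ hek hcap ih =>
    obtain ⟨u, hu⟩ := card_eq_one.mp hcap
    have hu' : u ∈ e ∧ u ∈ V₁ := mem_inter.mp (hu ▸ mem_singleton_self u)
    by_cases hvV₁ : v ∈ V₁
    · by_cases hve : v ∈ e
      · rw [filter_insert, if_neg (not_not.mpr hve)]
        have h := (ih hvV₁).union_isolated (S := e \ V₁)
          (disjoint_left.mpr fun a ha ha' => (mem_sdiff.mp ha').2 (mem_of_mem_erase ha))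
        convert h using 1
        ext a; simp only [mem_erase, mem_union, mem_sdiff]
        grind
      · rw [filter_insert, if_pos hve]
        have huv : u ≠ v := fun h => hve (h ▸ hu'.1)
        have h := (ih hvV₁).attach (f := e) (mem_erase.mpr ⟨huv, hu'.2⟩) ?_ hek
        · convert h using 1
          ext a; simp only [mem_erase, mem_union]
          grind
        · rw [inter_erase, hu, erase_eq_of_notMem (by simpa using huv.symm)]
    · have hve : v ∈ e := (mem_union.mp hv).resolve_left hvV₁
      have hE₁ : {g ∈ insert e E₁ | v ∉ g} = E₁ := by
        rw [filter_insert, if_neg (not_not.mpr hve), filter_true_of_mem]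
        exact fun g hg hvg => hvV₁ ((hT₁.isUniformHypergraph g hg).1 hvg)
      have h := hT₁.isHyperforest.union_isolated (S := (e \ V₁).erase v)
        (disjoint_left.mpr fun a ha ha' => (mem_sdiff.mp (mem_of_mem_erase ha')).2 ha)
      rw [hE₁]
      convert h using 1
      ext a; simp only [mem_erase, mem_union, mem_sdiff]
      grind

theorem IsHyperforest.mPolyEval_pos {k : ℕ} (hk : 0 < k) {V : Finset α}
    {E : Finset (Finset α)} (hF : IsHyperforest k V E) {x : ℝ}
    (hpos : ∀ W F, IsHypertree k W F → W ⊆ V → F ⊆ E → 0 < mPolyEval W.card k F x) :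
    0 < mPolyEval V.card k E x := by
  induction hF with
  | empty => simp [mPolyEval, mCount_zero]
  | @union V W E F hF hT hVW ih =>
    rw [mPolyEval_union hk hF.isUniformHypergraph hT.isUniformHypergraph hVW]
    refine mul_pos (ih fun W' F' hT' hW' hF' => ?_) (hpos W F hT subset_union_right
      subset_union_right)
    exact hpos W' F' hT' (hW'.trans subset_union_left) (hF'.trans subset_union_left)

namespace IsHypertree

variable {k : ℕ} {V : Finset α} {E : Finset (Finset α)}

theorem mPolyEval_pos_of_attach (hT : IsHypertree k V E)
    (hsub : ∀ r, (∀ z ≥ r, 0 ≤ mPolyEval V.card k E z) → ∀ V' E', IsHypertree k V' E' →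
      V' ⊆ V → E' ⊆ E → E' ≠ E → 0 < mPolyEval V'.card k E' r)
    {e : Finset α} {v : α} (he : e ∉ E) (hek : e.card = k) (hev : e ∩ V = {v}) {y : ℝ}
    (hy : ∀ z ≥ y, 0 ≤ mPolyEval (V ∪ e).card k (insert e E) z) {z : ℝ} (hz : y ≤ z) :
    0 < mPolyEval V.card k E z := by
  have hv : v ∈ e ∧ v ∈ V := mem_inter.mp (hev ▸ mem_singleton_self v)
  have hk : 0 < k := hek ▸ card_pos.mpr ⟨v, hv.1⟩
  have hcont := continuous_mPolyEval V.card k E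
  have htop := tendsto_mPolyEval_atTop hk (card_pos.mpr hT.nonempty) E
  by_contra! hz0
  obtain ⟨r, hzr, hr⟩ := exists_isGreatest_root_of_nonpos hcont htop hz0
  have hforest : 0 < mPolyEval (V.card - 1) k {g ∈ E | v ∉ g} r := by
    rw [← card_erase_of_mem hv.2]
    refine (hT.isHyperforest_erase hv.2).mPolyEval_pos hk fun W F hW hWV hFE => ?_
    refine hsub r (fun z hz => nonneg_of_isGreatest_root hcont htop hr hz) W F hW
      (hWV.trans (erase_subset v V)) (hFE.trans (filter_subset _ E)) ?_
    -- with all the edges of `T`, `W` would have as many vertices as `V`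
    rintro rfl
    have := card_le_card hWV
    rw [card_erase_of_mem hv.2, hW.card_eq, hT.card_eq] at this
    omega
  have hrec := mPolyEval_insert_of_pendant hT.isUniformHypergraph he hek hev r
  rw [show mPolyEval V.card k E r = 0 from hr.1, mul_zero, zero_sub] at hrec
  linarith [hy r (hz.trans hzr)]

theorem mPolyEval_pos_of_subtree (hT : IsHypertree k V E) {y : ℝ}
    (hy : ∀ z ≥ y, 0 ≤ mPolyEval V.card k E z) {V' : Finset α} {E' : Finset (Finset α)}
    (hT' : IsHypertree k V' E') (hV : V' ⊆ V) (hE : E' ⊆ E) (hne : E' ≠ E) {z : ℝ}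
    (hz : y ≤ z) : 0 < mPolyEval V'.card k E' z := by
  induction hn : E.card using Nat.strong_induction_on generalizing V E V' E' y z with
  | _ n ih =>
  obtain ⟨V₁, E₁, e, v, hT₁, hV₁, hE₁, he, hek, hev, rfl, rfl⟩ :=
    hT.exists_pendant_decomposition hT' hV hE hne
  have hlt : E₁.card < n := by rw [← hn, card_insert_of_notMem he]; omega
  have hpos₁ : ∀ z ≥ y, 0 < mPolyEval V₁.card k E₁ z := fun z hz =>
    hT₁.mPolyEval_pos_of_attach (fun r hr V' E' hT' hV hE hne => ih _ hlt hT₁ hr hT' hV hE hne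
      le_rfl rfl) he hek hev hy hz
  by_cases hE₁' : E' = E₁
  · subst hE₁'
    rw [hT'.card_eq, ← hT₁.card_eq]
    exact hpos₁ z hz
  · exact ih _ hlt hT₁ (fun z hz => (hpos₁ z hz).le) hT' hV₁ hE₁ hE₁' hz rfl

end IsHypertree

end Hypertrees

theorem stmt14_general {α : Type*} [DecidableEq α] (k : ℕ)
    (V : Finset α) (E : Finset (Finset α)) (hT : IsHypertree k V E)
    (V' : Finset α) (E' : Finset (Finset α)) (hT' : IsHypertree k V' E')
    (hVsub : V' ⊆ V) (hEsub : E' ⊆ E) (hproper : E'.card < E.card)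
    (ρ ρ' : ℝ)
    (hroot : mPolyEval V.card k E ρ = 0)
    (hmax : ∀ x : ℝ, mPolyEval V.card k E x = 0 → x ≤ ρ)
    (hroot' : mPolyEval V'.card k E' ρ' = 0) :
    ρ' < ρ := by
  have hk : 0 < k := hT.pos_of_nonempty (card_pos.mp ((Nat.zero_le _).trans_lt hproper))
  have hρ : ∀ z ≥ ρ, 0 ≤ mPolyEval V.card k E z := fun z hz =>
    nonneg_of_isGreatest_root (continuous_mPolyEval _ _ _)
      (tendsto_mPolyEval_atTop hk (card_pos.mpr hT.nonempty) E) ⟨hroot, hmax⟩ hz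
  by_contra! h
  exact (hT.mPolyEval_pos_of_subtree hρ hT' hVsub hEsub (fun h => hproper.ne (h ▸ rfl)) h).ne'
    hroot'

/-- If `T'` is a proper sub-hypertree of a `k`-uniform hypertree `T`, then the largest
real root of `φ_{T'}` is strictly less than the largest real root of `φ_T`. -/
theorem stmt14 {α : Type*} [DecidableEq α] (k : ℕ)
    (V : Finset α) (E : Finset (Finset α)) (hT : IsHypertree k V E)
    (V' : Finset α) (E' : Finset (Finset α)) (hT' : IsHypertree k V' E')
    (hVsub : V' ⊆ V) (hEsub : E' ⊆ E) (hproper : E'.card < E.card)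
    (ρ ρ' : ℝ)
    (hroot : mPolyEval V.card k E ρ = 0)
    (hmax : ∀ x : ℝ, mPolyEval V.card k E x = 0 → x ≤ ρ)
    (hroot' : mPolyEval V'.card k E' ρ' = 0)
    (hmax' : ∀ x : ℝ, mPolyEval V'.card k E' x = 0 → x ≤ ρ') :
    ρ' < ρ :=
  stmt14_general k V E hT V' E' hT' hVsub hEsub hproper ρ ρ' hroot hmax hroot'
end

section
/- For a k-uniform hypertree T, the largest real root ρ(T) of the matching polynomial satisfies ρ(T)^k ≤ number of edges of T; more precisely, if T has m ≥ 1 edges then 1 ≤ ρ(T)^k ≤ m. -/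
section AuxMatching

open Finset

variable {γ : Type*} [DecidableEq γ]

lemma mCount_zero_s15 (F : Finset (Finset γ)) : mCount F 0 = 1 := by
  classical
  unfold mCount
  convert Finset.card_singleton (∅ : Finset (Finset γ)) using 2
  ext M
  simp only [mem_filter, mem_powerset, mem_singleton, Finset.card_eq_zero]
  constructor
  · rintro ⟨-, h, -⟩; exact h
  · rintro rfl
    exact ⟨empty_subset _, rfl, by intro e he; simp at he⟩

lemma mCount_eq_zero {F : Finset (Finset γ)} {t : ℕ} (h : F.card < t) : mCount F t = 0 := by
  classical
  unfold mCount
  rw [Finset.card_eq_zero]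
  ext M
  simp only [mem_filter, mem_powerset, Finset.notMem_empty, iff_false]
  rintro ⟨hsub, hcard, -⟩
  exact absurd (Finset.card_le_card hsub) (by omega)

lemma mCount_succ_le (F : Finset (Finset γ)) (t : ℕ) :
    mCount F (t + 1) ≤ F.card * mCount F t := by
  classical
  unfold mCount
  rw [← Finset.card_product]
  set pick : Finset (Finset γ) → Finset γ := fun M => if h : M.Nonempty then h.choose else ∅
    with hpick
  apply Finset.card_le_card_of_injOn (fun M => (pick M, M.erase (pick M)))
  · intro M hM
    simp only [Finset.mem_coe, mem_filter, mem_powerset] at hM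
    obtain ⟨hsub, hcard, hmatch⟩ := hM
    have hne : M.Nonempty := by
      rw [← Finset.card_pos, hcard]; omega
    have hmem : pick M ∈ M := by
      rw [hpick]; simp only [hne, dif_pos]; exact hne.choose_spec
    simp only [Finset.mem_coe, Finset.mem_product, mem_filter, mem_powerset]
    refine ⟨hsub hmem, Finset.Subset.trans (Finset.erase_subset _ _) hsub, ?_, ?_⟩
    · rw [Finset.card_erase_of_mem hmem, hcard]; omega
    · intro e he f hf hef
      exact hmatch e (Finset.mem_of_mem_erase he) f (Finset.mem_of_mem_erase hf) hef

  · intro M hM M' hM' heq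
    simp only [Finset.coe_filter, Set.mem_setOf_eq, mem_powerset] at hM hM'
    obtain ⟨hsub, hcard, -⟩ := hM
    obtain ⟨hsub', hcard', -⟩ := hM'
    have h1 : pick M = pick M' := congrArg Prod.fst heq
    have h2 : M.erase (pick M) = M'.erase (pick M') := congrArg Prod.snd heq
    have hne : M.Nonempty := by rw [← Finset.card_pos, hcard]; omega
    have hne' : M'.Nonempty := by rw [← Finset.card_pos, hcard']; omega
    have hmem : pick M ∈ M := by
      rw [hpick]; simp only [hne, dif_pos]; exact hne.choose_spec
    have hmem' : pick M' ∈ M' := by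
      rw [hpick]; simp only [hne', dif_pos]; exact hne'.choose_spec
    rw [← Finset.insert_erase hmem, ← Finset.insert_erase hmem', h2, h1]

lemma mCount_erase (F : Finset (Finset γ)) {f : Finset γ} (hf : f ∈ F) (t : ℕ) :
    mCount F (t + 1) = mCount (F.erase f) (t + 1)
      + mCount ((F.erase f).filter (fun g => Disjoint f g)) t := by
  classical
  unfold mCount
  set P : ℕ → Finset (Finset γ) → Prop := fun s M => M.card = s ∧ IsHyperMatching M with hP
  set A := F.powerset.filter (P (t + 1)) with hA
  have hsplit : A.card = (A.filter (fun M => f ∉ M)).card + (A.filter (fun M => f ∈ M)).card := by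
    have h2 := Finset.card_filter_add_card_filter_not (s := A) (p := fun M => f ∉ M)
    simp only [not_not] at h2
    omega
  rw [hsplit]
  congr 1
  · congr 1
    ext M
    simp only [hA, mem_filter, mem_powerset, Finset.subset_erase, and_assoc]
    tauto
  · apply Finset.card_bij (fun M _ => M.erase f)
    · intro M hM
      simp only [hA, hP, mem_filter, mem_powerset] at hM
      obtain ⟨⟨hsub, hcard, hmatch⟩, hfM⟩ := hM
      simp only [mem_filter, mem_powerset, Finset.subset_iff]
      refine ⟨?_, ?_, ?_⟩
      · intro g hg
        have hgM := Finset.mem_of_mem_erase hg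
        have hgf := Finset.ne_of_mem_erase hg
        simp only [mem_filter, Finset.mem_erase]
        exact ⟨⟨hgf, hsub hgM⟩, (hmatch f hfM g hgM (Ne.symm hgf))⟩
      · rw [Finset.card_erase_of_mem hfM, hcard]; omega
      · intro e he g hg heg
        exact hmatch e (Finset.mem_of_mem_erase he) g (Finset.mem_of_mem_erase hg) heg
    · intro M hM M' hM' heq
      simp only [hA, mem_filter] at hM hM'
      rw [← Finset.insert_erase hM.2, ← Finset.insert_erase hM'.2, heq]
    · intro M' hM'
      simp only [hP, mem_filter, mem_powerset] at hM'
      obtain ⟨hsub, hcard, hmatch⟩ := hM'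
      have hsub2 : ∀ g ∈ M', g ≠ f ∧ g ∈ F ∧ Disjoint f g := by
        intro g hg
        have := hsub hg
        simp only [mem_filter, Finset.mem_erase] at this
        exact ⟨this.1.1, this.1.2, this.2⟩
      have hfM' : f ∉ M' := by
        intro hf'
        exact (hsub2 f hf').1 rfl
      refine ⟨insert f M', ?_, ?_⟩
      · rw [hA, mem_filter, mem_filter, mem_powerset]
        refine ⟨⟨?_, ?_, ?_⟩, Finset.mem_insert_self f M'⟩
        · intro g hg
          rcases Finset.mem_insert.mp hg with rfl | hg2
          · exact hf
          · exact (hsub2 g hg2).2.1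
        · rw [Finset.card_insert_of_notMem hfM', hcard]
        · intro e he g hg heg
          rcases Finset.mem_insert.mp he with he1 | he2
          · rcases Finset.mem_insert.mp hg with hg1 | hg2
            · exact absurd (he1.trans hg1.symm) heg
            · exact he1 ▸ (hsub2 g hg2).2.2
          · rcases Finset.mem_insert.mp hg with hg1 | hg2
            · exact hg1 ▸ ((hsub2 e he2).2.2).symm
            · exact hmatch e he2 g hg2 heg
      · rw [Finset.erase_insert hfM']

noncomputable def hfun (F : Finset (Finset γ)) (u : ℝ) : ℝ :=
  ∑ t ∈ Finset.range (F.card + 1), (-1 : ℝ) ^ t * (mCount F t : ℝ) * u ^ t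

lemma hfun_cont (F : Finset (Finset γ)) : Continuous (hfun F) := by
  unfold hfun
  exact continuous_finset_sum _ (fun t _ => by fun_prop)

lemma hfun_ext (F : Finset (Finset γ)) (u : ℝ) {N : ℕ} (hN : F.card + 1 ≤ N) :
    hfun F u = ∑ t ∈ Finset.range N, (-1 : ℝ) ^ t * (mCount F t : ℝ) * u ^ t := by
  unfold hfun
  apply Finset.sum_subset (Finset.range_subset_range.mpr hN)
  intro t _ ht
  rw [Finset.mem_range, not_lt] at ht
  rw [mCount_eq_zero (by omega)]
  simp

lemma hfun_zero (F : Finset (Finset γ)) : hfun F 0 = 1 := by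
  unfold hfun
  rw [Finset.sum_range_succ'] 
  have : ∀ t ∈ Finset.range F.card, (-1 : ℝ) ^ (t+1) * (mCount F (t+1) : ℝ) * (0:ℝ) ^ (t+1) = 0 := by
    intro t _; simp
  rw [Finset.sum_congr rfl this]
  simp [mCount_zero_s15]

lemma hfun_empty (u : ℝ) : hfun (∅ : Finset (Finset γ)) u = 1 := by
  unfold hfun
  simp [mCount_zero_s15]

lemma hfun_erase (F : Finset (Finset γ)) {f : Finset γ} (hf : f ∈ F) (u : ℝ) :
    hfun F u = hfun (F.erase f) u
      - u * hfun ((F.erase f).filter (fun g => Disjoint f g)) u := by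
  classical
  have hm : 1 ≤ F.card := Finset.card_pos.mpr ⟨f, hf⟩
  have hGcard : (F.erase f).card = F.card - 1 := Finset.card_erase_of_mem hf
  have hFfcard : ((F.erase f).filter (fun g => Disjoint f g)).card ≤ F.card - 1 := by
    rw [← hGcard]; exact Finset.card_le_card (Finset.filter_subset _ _)
  rw [hfun_ext (F.erase f) u (N := F.card + 1) (by omega)]
  unfold hfun
  rw [Finset.sum_range_succ' (fun t => (-1 : ℝ) ^ t * (mCount F t : ℝ) * u ^ t) F.card,
      Finset.sum_range_succ' (fun t => (-1 : ℝ) ^ t * (mCount (F.erase f) t : ℝ) * u ^ t) F.card]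
  have hrec : ∀ t ∈ Finset.range F.card,
      (-1 : ℝ) ^ (t+1) * (mCount F (t+1) : ℝ) * u ^ (t+1)
      = (-1 : ℝ) ^ (t+1) * (mCount (F.erase f) (t+1) : ℝ) * u ^ (t+1)
        - ((-1 : ℝ) ^ t * (mCount ((F.erase f).filter (fun g => Disjoint f g)) t : ℝ) * u ^ t) * u := by
    intro t _
    rw [mCount_erase F hf t]
    push_cast
    ring
  rw [Finset.sum_congr rfl hrec, Finset.sum_sub_distrib]
  have hFf : hfun ((F.erase f).filter (fun g => Disjoint f g)) u
      = ∑ t ∈ Finset.range F.card,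
          (-1 : ℝ) ^ t * (mCount ((F.erase f).filter (fun g => Disjoint f g)) t : ℝ) * u ^ t := by
    apply hfun_ext
    omega
  unfold hfun at hFf
  rw [hFf]
  have h3 : ∑ x ∈ Finset.range F.card,
      (-1 : ℝ) ^ x * (mCount ((F.erase f).filter (fun g => Disjoint f g)) x : ℝ) * u ^ x * u
      = u * ∑ x ∈ Finset.range F.card,
          (-1 : ℝ) ^ x * (mCount ((F.erase f).filter (fun g => Disjoint f g)) x : ℝ) * u ^ x := by
    rw [Finset.mul_sum]
    exact Finset.sum_congr rfl (fun x _ => by ring)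
  rw [h3, mCount_zero_s15, mCount_zero_s15]
  ring

lemma alt_sum_bounds (N : ℕ) : ∀ (a : ℕ → ℝ), (∀ t, 0 ≤ a t) → (∀ t, a (t+1) ≤ a t) →
    0 ≤ ∑ t ∈ Finset.range N, (-1 : ℝ) ^ t * a t
    ∧ ∑ t ∈ Finset.range N, (-1 : ℝ) ^ t * a t ≤ a 0 := by
  induction N with
  | zero => intro a h0 _; simpa using h0 0
  | succ N ih =>
    intro a h0 hmono
    have hshift := ih (fun t => a (t+1)) (fun t => h0 (t+1)) (fun t => hmono (t+1))
    have hkey : ∑ t ∈ Finset.range (N+1), (-1 : ℝ) ^ t * a t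
        = a 0 - ∑ t ∈ Finset.range N, (-1 : ℝ) ^ t * a (t+1) := by
      rw [Finset.sum_range_succ' (fun t => (-1 : ℝ) ^ t * a t) N]
      have : ∀ t ∈ Finset.range N,
          (-1 : ℝ) ^ (t+1) * a (t+1) = -((-1 : ℝ) ^ t * a (t+1)) := by
        intro t _; ring
      rw [Finset.sum_congr rfl this, Finset.sum_neg_distrib]
      ring
    rw [hkey]
    constructor
    · have := hshift.2
      have h01 := hmono 0
      linarith
    · have := hshift.1
      linarith

lemma hfun_pos_small (F : Finset (Finset γ)) (u : ℝ) (h0 : 0 ≤ u)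
    (hu : u * F.card < 1) : 0 < hfun F u := by
  set a : ℕ → ℝ := fun t => (mCount F t : ℝ) * u ^ t with ha
  have hnn : ∀ t, 0 ≤ a t := fun t => mul_nonneg (Nat.cast_nonneg _) (pow_nonneg h0 t)
  have hmono : ∀ t, a (t+1) ≤ a t := by
    intro t
    have h1 : (mCount F (t+1) : ℝ) ≤ (F.card : ℝ) * mCount F t := by
      exact_mod_cast mCount_succ_le F t
    have h2 : a (t+1) = (mCount F (t+1) : ℝ) * u ^ t * u := by rw [ha]; ring
    have h3 : (mCount F (t+1) : ℝ) * u ^ t * u ≤ (F.card : ℝ) * (mCount F t : ℝ) * u ^ t * u := by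
      have := mul_le_mul_of_nonneg_right (mul_le_mul_of_nonneg_right h1 (pow_nonneg h0 t)) h0
      linarith
    have h4 : (F.card : ℝ) * (mCount F t : ℝ) * u ^ t * u
        = (u * F.card) * ((mCount F t : ℝ) * u ^ t) := by ring
    have h5 : (u * F.card) * ((mCount F t : ℝ) * u ^ t) ≤ 1 * ((mCount F t : ℝ) * u ^ t) :=
      mul_le_mul_of_nonneg_right hu.le (hnn t)
    rw [ha]
    simp only at h2 h3 h4 h5 ⊢
    calc (mCount F (t+1) : ℝ) * u ^ (t+1) = (mCount F (t+1) : ℝ) * u ^ t * u := by ring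
      _ ≤ (F.card : ℝ) * (mCount F t : ℝ) * u ^ t * u := h3
      _ = (u * F.card) * ((mCount F t : ℝ) * u ^ t) := by ring
      _ ≤ 1 * ((mCount F t : ℝ) * u ^ t) := h5
      _ = (mCount F t : ℝ) * u ^ t := by ring
  have hform : hfun F u = ∑ t ∈ Finset.range (F.card + 1), (-1 : ℝ) ^ t * a t := by
    unfold hfun
    exact Finset.sum_congr rfl (fun t _ => by rw [ha]; ring)
  have hshift := alt_sum_bounds F.card (fun t => a (t+1)) (fun t => hnn (t+1))
      (fun t => hmono (t+1))
  have hkey : ∑ t ∈ Finset.range (F.card + 1), (-1 : ℝ) ^ t * a t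
      = a 0 - ∑ t ∈ Finset.range F.card, (-1 : ℝ) ^ t * a (t+1) := by
    rw [Finset.sum_range_succ' (fun t => (-1 : ℝ) ^ t * a t) F.card]
    have : ∀ t ∈ Finset.range F.card,
        (-1 : ℝ) ^ (t+1) * a (t+1) = -((-1 : ℝ) ^ t * a (t+1)) := by
      intro t _; ring
    rw [Finset.sum_congr rfl this, Finset.sum_neg_distrib]
    ring
  have ha0 : a 0 = 1 := by rw [ha]; simp [mCount_zero_s15]
  have ha1 : a 1 ≤ u * F.card := by
    have h1 : (mCount F 1 : ℝ) ≤ (F.card : ℝ) * mCount F 0 := by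
      exact_mod_cast mCount_succ_le F 0
    rw [mCount_zero_s15] at h1
    have : a 1 = (mCount F 1 : ℝ) * u := by rw [ha]; ring
    rw [this]
    calc (mCount F 1 : ℝ) * u ≤ ((F.card : ℝ) * 1) * u := by
          exact mul_le_mul_of_nonneg_right (by simpa using h1) h0
      _ = u * F.card := by ring
  have hle := hshift.2
  rw [hform, hkey, ha0]
  have : ∑ t ∈ Finset.range F.card, (-1 : ℝ) ^ t * a (t+1) ≤ a 1 := hle
  linarith [ha1.trans_lt hu |>.le, this.trans ha1]

/-- Godsil-type monotonicity: if a sub-edge-set's polynomial is nonpositive somewhere on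
`[0, s]`, then so is the full edge set's polynomial somewhere on `[0, s]`. -/
lemma master : ∀ (F F' : Finset (Finset γ)), F' ⊆ F → ∀ s : ℝ, 0 ≤ s →
    hfun F' s ≤ 0 → ∃ r, 0 ≤ r ∧ r ≤ s ∧ hfun F r ≤ 0 := by
  intro F
  induction F using Finset.strongInduction with
  | _ F ih =>
    intro F' hsub s hs hneg
    by_cases heq : F' = F
    · exact ⟨s, hs, le_refl s, heq ▸ hneg⟩
    · obtain ⟨f, hfF, hfF'⟩ := Finset.exists_of_ssubset (lt_of_le_of_ne hsub heq)
      set G := F.erase f with hG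
      have hGss : G ⊂ F := Finset.erase_ssubset hfF
      have hsubG : F' ⊆ G := Finset.subset_erase.mpr ⟨hsub, hfF'⟩
      obtain ⟨s1, hs1a, hs1b, hs1c⟩ := ih G hGss F' hsubG s hs hneg
      -- first nonpositive point of G
      set S : Set ℝ := {u | u ∈ Set.Icc 0 s1 ∧ hfun G u ≤ 0} with hS
      have hclosed : IsClosed S := by
        apply IsClosed.inter isClosed_Icc
        exact isClosed_le (hfun_cont G) continuous_const
      have hSne : S.Nonempty := ⟨s1, ⟨hs1a, le_refl s1⟩, hs1c⟩
      have hbdd : BddBelow S := ⟨0, fun x hx => hx.1.1⟩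
      set r1 := sInf S with hr1
      have hr1mem : r1 ∈ S := IsClosed.csInf_mem hclosed hSne hbdd
      have hr1pos : 0 < r1 := by
        rcases lt_or_eq_of_le hr1mem.1.1 with h | h
        · exact h
        · exfalso
          have := hr1mem.2
          rw [← h, hfun_zero] at this
          linarith
      have hGposlt : ∀ u, 0 ≤ u → u < r1 → 0 < hfun G u := by
        intro u hu hur
        by_contra hcon
        push_neg at hcon
        have : u ∈ S := ⟨⟨hu, le_trans hur.le hr1mem.1.2⟩, hcon⟩
        exact absurd (csInf_le hbdd this) (not_le.mpr hur)
      set Ff := G.filter (fun g => Disjoint f g) with hFf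
      have hFfsub : Ff ⊆ G := Finset.filter_subset _ _
      have hFfpos : ∀ u, 0 ≤ u → u < r1 → 0 < hfun Ff u := by
        intro u hu hur
        by_contra hcon
        push_neg at hcon
        obtain ⟨r, hra, hrb, hrc⟩ := ih G hGss Ff hFfsub u hu hcon
        exact absurd (hGposlt r hra (lt_of_le_of_lt hrb hur)) (not_lt.mpr hrc)
      have hFfr1 : 0 ≤ hfun Ff r1 := by
        by_contra hcon
        push_neg at hcon
        -- IVT: hfun Ff 0 = 1 > 0, hfun Ff r1 < 0, so a zero c in (0, r1)
        have hivt := intermediate_value_Icc' (le_of_lt hr1pos) (hfun_cont Ff).continuousOn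
        have h0mem : (0 : ℝ) ∈ Set.Icc (hfun Ff r1) (hfun Ff 0) := by
          rw [hfun_zero]
          exact ⟨hcon.le, zero_le_one⟩
        obtain ⟨c, hc, hceq⟩ := hivt h0mem
        have hcr1 : c < r1 := by
          rcases lt_or_eq_of_le hc.2 with h | h
          · exact h
          · exfalso; rw [h] at hceq; rw [hceq] at hcon; exact lt_irrefl 0 hcon
        exact absurd (hFfpos c hc.1 hcr1) (not_lt.mpr (le_of_eq hceq))
      refine ⟨r1, hr1mem.1.1, le_trans hr1mem.1.2 hs1b, ?_⟩
      rw [hfun_erase F hfF r1, ← hG, ← hFf]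
      have := hr1mem.2
      nlinarith [mul_nonneg hr1pos.le hFfr1]

/-- Any nonempty edge set has a nonpositive point of `hfun` in `(0, 1]`. -/
lemma exists_nonpos : ∀ (F : Finset (Finset γ)), F.Nonempty →
    ∃ u, 0 < u ∧ u ≤ 1 ∧ hfun F u ≤ 0 := by
  intro F
  induction F using Finset.strongInduction with
  | _ F ih =>
    intro hFne
    obtain ⟨f, hf⟩ := hFne
    set G := F.erase f with hG
    have hGss : G ⊂ F := Finset.erase_ssubset hf
    by_cases hGne : G.Nonempty
    · obtain ⟨u0, hu0a, hu0b, hu0c⟩ := ih G hGss hGne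
      obtain ⟨r, hra, hrb, hrc⟩ := master F G hGss.subset u0 hu0a.le hu0c
      have hrpos : 0 < r := by
        rcases lt_or_eq_of_le hra with h | h
        · exact h
        · exfalso; rw [← h, hfun_zero] at hrc; linarith
      exact ⟨r, hrpos, le_trans hrb hu0b, hrc⟩
    · have hGe : G = ∅ := Finset.not_nonempty_iff_eq_empty.mp hGne
      refine ⟨1, one_pos, le_refl 1, ?_⟩
      rw [hfun_erase F hf 1, ← hG, hGe]
      simp [hfun_empty]

end AuxMatching


lemma tree_edges {α : Type*} [DecidableEq α] {k : ℕ} {V : Finset α} {E : Finset (Finset α)}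
    (hT : IsHypertree k V E) : ∀ e ∈ E, e ⊆ V ∧ e.card = k := by
  induction hT with
  | single v => intro e he; simp at he
  | attach e hT hk h1 ih =>
    intro g hg
    rcases Finset.mem_insert.mp hg with rfl | hg2
    · exact ⟨Finset.subset_union_right, hk⟩
    · obtain ⟨hsub, hcard⟩ := ih g hg2
      exact ⟨hsub.trans Finset.subset_union_left, hcard⟩

lemma tree_k_pos {α : Type*} [DecidableEq α] {k : ℕ} {V : Finset α} {E : Finset (Finset α)}
    (hT : IsHypertree k V E) (hne : E.Nonempty) : 1 ≤ k := by
  induction hT with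
  | single v => simp at hne
  | @attach V' E' e hT hk h1 ih =>
    have hne2 : (e ∩ V').Nonempty := Finset.card_pos.mp (by rw [h1]; omega)
    have he : e.Nonempty := hne2.mono Finset.inter_subset_left
    have := Finset.card_pos.mpr he
    omega

lemma matching_card_le {α : Type*} [DecidableEq α] {k : ℕ} {V : Finset α}
    {E : Finset (Finset α)} (hT : IsHypertree k V E) (t : ℕ) (h : mCount E t ≠ 0) :
    t * k ≤ V.card := by
  classical
  have hne : (E.powerset.filter (fun M => M.card = t ∧ IsHyperMatching M)).Nonempty := by
    rw [← Finset.card_pos]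
    unfold mCount at h
    have := Finset.card_filter_le E.powerset (fun M => M.card = t ∧ IsHyperMatching M)
    omega
  obtain ⟨M, hM⟩ := hne
  rw [Finset.mem_filter, Finset.mem_powerset] at hM
  obtain ⟨hsub, hcard, hmatch⟩ := hM
  have hdisj : ∀ x ∈ M, ∀ y ∈ M, x ≠ y → Disjoint (id x) (id y) := hmatch
  have hbu : (M.biUnion id).card = ∑ e ∈ M, (id e).card := Finset.card_biUnion hdisj
  have hsum : ∑ e ∈ M, (id e).card = t * k := by
    have : ∀ e ∈ M, (id e).card = k := fun e he => (tree_edges hT e (hsub he)).2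
    rw [Finset.sum_congr rfl this, Finset.sum_const, hcard, smul_eq_mul]
  have hsubV : M.biUnion id ⊆ V := by
    intro x hx
    obtain ⟨e, he, hxe⟩ := Finset.mem_biUnion.mp hx
    exact (tree_edges hT e (hsub he)).1 hxe
  calc t * k = (M.biUnion id).card := by rw [hbu, hsum]
    _ ≤ V.card := Finset.card_le_card hsubV

lemma eval_eq {α : Type*} [DecidableEq α] {k : ℕ} {V : Finset α} {E : Finset (Finset α)}
    (hT : IsHypertree k V E) (x : ℝ) (hx : x ≠ 0) :
    mPolyEval V.card k E x = x ^ V.card * hfun E (x ^ k)⁻¹ := by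
  unfold mPolyEval hfun
  rw [Finset.mul_sum]
  apply Finset.sum_congr rfl
  intro t _
  by_cases h : mCount E t = 0
  · rw [h]; simp
  · have hle : t * k ≤ V.card := matching_card_le hT t h
    have hxk : x ^ (t * k) ≠ 0 := pow_ne_zero _ hx
    have hpow : x ^ (V.card - t * k) * x ^ (t * k) = x ^ V.card := by
      rw [← pow_add, Nat.sub_add_cancel hle]
    have h2 : ((x ^ k)⁻¹) ^ t = (x ^ (t * k))⁻¹ := by
      rw [inv_pow, ← pow_mul, mul_comm k t]
    have h3 : x ^ (V.card - t * k) = x ^ V.card / x ^ (t * k) := by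
      rw [eq_div_iff hxk]; exact hpow
    rw [h2, h3]
    field_simp


/-- For a `k`-uniform hypertree `T` with `m ≥ 1` edges, the largest real root `ρ(T)` of
the matching polynomial satisfies `1 ≤ ρ(T)^k ≤ m`. -/
theorem stmt15 {α : Type*} [DecidableEq α] (k : ℕ)
    (V : Finset α) (E : Finset (Finset α)) (hT : IsHypertree k V E) (hE : 1 ≤ E.card)
    (ρ : ℝ)
    (hroot : mPolyEval V.card k E ρ = 0)
    (hmax : ∀ x : ℝ, mPolyEval V.card k E x = 0 → x ≤ ρ) :
    1 ≤ ρ ^ k ∧ ρ ^ k ≤ (E.card : ℝ) := by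
  classical
  have hEne : E.Nonempty := Finset.card_pos.mp (by omega)
  have hk : 1 ≤ k := tree_k_pos hT hEne
  have hkR : ((k : ℝ)) ≠ 0 := Nat.cast_ne_zero.mpr (by omega)
  -- Step 1: find a zero c ∈ (0,1] of hfun E
  obtain ⟨u0, hu0a, hu0b, hu0c⟩ := exists_nonpos E hEne
  have hivt := intermediate_value_Icc' hu0a.le (hfun_cont E).continuousOn
  have h0mem : (0 : ℝ) ∈ Set.Icc (hfun E u0) (hfun E 0) := by
    rw [hfun_zero]; exact ⟨hu0c, zero_le_one⟩
  obtain ⟨c, hc, hceq⟩ := hivt h0mem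
  have hcpos : 0 < c := by
    rcases lt_or_eq_of_le hc.1 with h | h
    · exact h
    · exfalso; rw [← h, hfun_zero] at hceq; linarith
  have hc1 : c ≤ 1 := hc.2.trans hu0b
  -- Step 2: the corresponding root x0 = (c⁻¹)^(1/k) ≥ 1
  set x0 : ℝ := (c⁻¹) ^ ((k : ℝ)⁻¹) with hx0
  have hcinv1 : 1 ≤ c⁻¹ := one_le_inv_iff₀.mpr ⟨hcpos, hc1⟩ 
  have hx0ge1 : 1 ≤ x0 := Real.one_le_rpow hcinv1 (by positivity)
  have hx0pos : 0 < x0 := lt_of_lt_of_le one_pos hx0ge1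
  have hx0k : x0 ^ k = c⁻¹ := by
    rw [hx0, ← Real.rpow_natCast ((c⁻¹) ^ ((k : ℝ)⁻¹)) k, ← Real.rpow_mul (by positivity),
        inv_mul_cancel₀ hkR, Real.rpow_one]
  have hx0root : mPolyEval V.card k E x0 = 0 := by
    rw [eval_eq hT x0 (ne_of_gt hx0pos), hx0k, inv_inv, hceq, mul_zero]
  have hρ1 : 1 ≤ ρ := le_trans hx0ge1 (hmax x0 hx0root)
  have hρpos : 0 < ρ := lt_of_lt_of_le one_pos hρ1
  constructor
  · calc (1 : ℝ) = 1 ^ k := (one_pow k).symm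
      _ ≤ ρ ^ k := pow_le_pow_left₀ zero_le_one hρ1 k
  · -- Step 3: upper bound
    by_contra hcon
    push_neg at hcon
    have hρk : (0 : ℝ) < ρ ^ k := pow_pos hρpos k
    have hzero : hfun E ((ρ ^ k)⁻¹) = 0 := by
      have heval := eval_eq hT ρ (ne_of_gt hρpos)
      have hρn : ρ ^ V.card ≠ 0 := pow_ne_zero _ (ne_of_gt hρpos)
      have h0 : ρ ^ V.card * hfun E ((ρ ^ k)⁻¹) = 0 := by rw [← heval, hroot]
      exact (mul_eq_zero.mp h0).resolve_left hρn
    have hsmall : (ρ ^ k)⁻¹ * E.card < 1 := by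
      rw [inv_mul_lt_iff₀ hρk, mul_one]
      exact hcon
    have := hfun_pos_small E ((ρ ^ k)⁻¹) (by positivity) hsmall
    rw [hzero] at this
    exact lt_irrefl 0 this
end
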